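/- Let k be a field and let f ∈ k[t_1,…,t_r, y_1,…,y_n] be a polynomial such that for each i ∈ {1,…,r}, the image of f in the quotient ring k[t_1,…,t_r,y_1,…,y_n]/(t_i) is a unit. Then there exist a nonzero constant c ∈ k and a polynomial g ∈ k[t_1,…,t_r,y_1,…,y_n] such that f = c − t_1 t_2 ⋯ t_r · g. -/

import Mathlib

/-!
Setting `t_i = 0` is a retraction of `k[t, y]` onto a polynomial ring that kills exactly `(t_i)`,
so a unit modulo `t_i` retracts to a unit of a polynomial ring, i.e. to a nonzero constant; since
the retraction preserves constant coefficients, that constant is `c = f(0)` for every `i`, and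
`t_i ∣ f - c`. The `t_i` are pairwise non-associated primes, so their product divides `f - c`.
-/

open MvPolynomial

theorem Finset.prod_dvd_of_prime_of_dvd {M ι : Type*} [CommMonoidWithZero M] {p : ι → M}
    {s : Finset ι} {a : M} (hp : ∀ i ∈ s, Prime (p i))
    (hdistinct : ∀ i ∈ s, ∀ j ∈ s, p i ∣ p j → i = j) (hdvd : ∀ i ∈ s, p i ∣ a) :
    ∏ i ∈ s, p i ∣ a := by
  classical
  induction s using Finset.induction_on with
  | empty => simp
  | insert i s his ih =>
    have hs {j} (hj : j ∈ s) : j ∈ insert i s := Finset.mem_insert_of_mem hj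
    have hi := Finset.mem_insert_self i s
    obtain ⟨g, rfl⟩ := ih (fun j hj => hp j (hs hj))
      (fun j hj l hl => hdistinct j (hs hj) l (hs hl)) (fun j hj => hdvd j (hs hj))
    have hndvd : ¬ p i ∣ ∏ j ∈ s, p j := fun h => by
      obtain ⟨j, hj, hij⟩ := (hp i hi).exists_mem_finset_dvd h
      exact his (hdistinct i hi j (hs hj) hij ▸ hj)
    obtain ⟨g', rfl⟩ := ((hp i hi).dvd_or_dvd (hdvd i hi)).resolve_left hndvd
    rw [Finset.prod_insert his]
    exact ⟨g', by ac_rfl⟩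

namespace MvPolynomial

variable {σ R : Type*} [CommRing R] [DecidableEq σ] (i : σ)

noncomputable def substXZero : MvPolynomial σ R →ₐ[R] MvPolynomial σ R :=
  aeval (Function.update X i 0)

theorem mk_span_X_comp_substXZero :
    (Ideal.Quotient.mk (Ideal.span {(X i : MvPolynomial σ R)})).comp (substXZero i).toRingHom =
      Ideal.Quotient.mk _ := by
  refine ringHom_ext (fun _ => by simp [substXZero]) fun j => ?_
  rcases eq_or_ne j i with rfl | hj <;> simp [substXZero, *]

theorem X_dvd_sub_substXZero (p : MvPolynomial σ R) : X i ∣ p - substXZero i p := by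
  rw [← Ideal.mem_span_singleton, ← Ideal.Quotient.eq]
  exact (RingHom.congr_fun (mk_span_X_comp_substXZero i) p).symm

theorem constantCoeff_substXZero (p : MvPolynomial σ R) :
    constantCoeff (substXZero i p) = constantCoeff p := by
  have hcomp :
      constantCoeff.comp (substXZero i).toRingHom = (constantCoeff : MvPolynomial σ R →+* R) := by
    refine ringHom_ext (fun _ => by simp [substXZero]) fun j => ?_
    rcases eq_or_ne j i with rfl | hj <;> simp [substXZero, *]
  exact RingHom.congr_fun hcomp p

theorem isUnit_substXZero_of_isUnit_mk {p : MvPolynomial σ R}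
    (hp : IsUnit (Ideal.Quotient.mk (Ideal.span {(X i : MvPolynomial σ R)}) p)) :
    IsUnit (substXZero i p) := by
  have hker : ∀ q ∈ Ideal.span {(X i : MvPolynomial σ R)}, (substXZero i).toRingHom q = 0 := by
    intro q hq
    obtain ⟨q, rfl⟩ := Ideal.mem_span_singleton'.mp hq
    simp [substXZero]
  simpa using hp.map (Ideal.Quotient.lift _ _ hker)

theorem X_dvd_sub_C_constantCoeff_of_isUnit_mk [IsDomain R] {p : MvPolynomial σ R}
    (hp : IsUnit (Ideal.Quotient.mk (Ideal.span {(X i : MvPolynomial σ R)}) p)) :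
    X i ∣ p - C (constantCoeff p) ∧ IsUnit (constantCoeff p) := by
  obtain ⟨c, hc, hpc⟩ := isUnit_iff_eq_C_of_isReduced.mp (isUnit_substXZero_of_isUnit_mk i hp)
  have hcoeff : constantCoeff p = c := by
    rw [← constantCoeff_substXZero i, hpc, constantCoeff_C]
  rw [hcoeff, ← hpc]
  exact ⟨X_dvd_sub_substXZero i p, hc⟩

end MvPolynomial

theorem stmt_1 (k : Type*) [Field k] (r n : ℕ)
    (f : MvPolynomial (Fin r ⊕ Fin n) k)
    (hf : ∀ i : Fin r,
      IsUnit (Ideal.Quotient.mk (Ideal.span {(X (Sum.inl i) : MvPolynomial (Fin r ⊕ Fin n) k)}) f)) :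
    ∃ (c : k) (g : MvPolynomial (Fin r ⊕ Fin n) k), c ≠ 0 ∧
      f = C c - (∏ i : Fin r, X (Sum.inl i)) * g := by
  obtain _ | ⟨⟨i₀⟩⟩ := isEmpty_or_nonempty (Fin r)
  · exact ⟨1, C 1 - f, one_ne_zero, by simp⟩
  have hX i := X_dvd_sub_C_constantCoeff_of_isUnit_mk _ (hf i)
  obtain ⟨g, hg⟩ : ∏ i : Fin r, (X (Sum.inl i) : MvPolynomial (Fin r ⊕ Fin n) k) ∣
      f - C (constantCoeff f) :=
    Finset.prod_dvd_of_prime_of_dvd (fun i _ => X_prime)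
      (fun i _ j _ h => Sum.inl_injective (X_dvd_X.mp h)) (fun i _ => (hX i).1)
  exact ⟨constantCoeff f, -g, (hX i₀).2.ne_zero, by rw [mul_neg, sub_neg_eq_add, ← hg]; ring⟩
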